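/- arXiv:0711.0011 — 4 statements merged into one kernel-verified Lean document; each statement's English description precedes it below -/
import Mathlib

section
/- In the free abelian group on chord diagrams with 2g chords (modulo diagrams with more than one cycle), the class of any chord diagram D with more than one connected component is a boundary: there exists a diagram D' with 2g+1 chords and exactly 2 cycles, obtained from D by adding a chord c crossing no chord of D and separating the components, such that the alternating sum of the one-chord deletions of D' equals ±D modulo diagrams with more than one cycle. -/
/-- The next point clockwise on the cyclically ordered set of `N` points. -/
def cnext {N : ℕ} (x : Fin N) : Fin N := ⟨(x.val + 1) % N, Nat.mod_lt _ x.pos⟩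

/-- Clockwise distance from `x` to `y` among `N` cyclically ordered points. -/
def cdist {N : ℕ} (x y : Fin N) : ℕ := (y.val + N - x.val) % N

/-- `z` lies strictly between `x` and `y` in clockwise cyclic order. -/
def CBetween {N : ℕ} (x z y : Fin N) : Prop := 0 < cdist x z ∧ cdist x z < cdist x y

/-- A chord diagram with `n` chords is a fixed-point-free involution (perfect
matching) `m` on the `2n` cyclically ordered points `Fin (2n)`.  The chord at
`a` has endpoints `a` and `m a`.  Two chords cross iff their endpoints
interleave in the cyclic order: exactly one endpoint of the chord at `b` lies
strictly inside the arc from `a` to `m a`. -/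
def Crosses {N : ℕ} (m : Fin N → Fin N) (a b : Fin N) : Prop :=
  Xor' (CBetween a b (m a)) (CBetween a (m b) (m a))

/-- The boundary traversal permutation of the one-vertex fat graph associated
to the chord diagram `m`: follow the chord from `x` to `m x`, then the outer
edge to the next point `m x + 1`. -/
def bperm {N : ℕ} (m : Fin N → Fin N) : Fin N → Fin N := fun x => cnext (m x)

/-- The number of cycles of the chord diagram `m`, i.e. the number of boundary
components of the associated one-vertex fat graph: the number of orbits of the
boundary traversal permutation, counted by their minimal elements (every orbit
of a permutation of `Fin N` is exhausted by the first `N` iterates). -/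
def numCycles {N : ℕ} (m : Fin N → Fin N) : ℕ :=
  (Finset.univ.filter fun i : Fin N =>
    ∀ k ∈ Finset.range N, ¬ ((bperm m)^[k] i < i)).card

/-- A chord diagram is disconnected (has more than one connected component,
where connected components are generated by the crossing relation on chords)
iff the chords can be split into two nonempty chord-closed sets with no
crossing between them. -/
def Disconnected {N : ℕ} (m : Fin N → Fin N) : Prop :=
  ∃ A : Finset (Fin N), A.Nonempty ∧ Aᶜ.Nonempty ∧ (∀ i ∈ A, m i ∈ A) ∧
    ∀ a ∈ A, ∀ b ∈ Aᶜ, ¬ Crosses m a b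

/-- Deletion of the chord with endpoints `p` and `m p` from a diagram on
`M + 2` points, yielding a diagram on `M` points via the order-preserving
relabelling of the remaining points. -/
noncomputable def deleteChord {M : ℕ} (m : Fin (M + 2) → Fin (M + 2))
    (p : Fin (M + 2)) : Fin M → Fin M :=
  let s : Finset (Fin (M + 2)) := (Finset.univ.erase p).erase (m p)
  if hs : s.card = M then
    let e := s.orderIsoOfFin hs
    fun i => if h : m (e i) ∈ s then e.symm ⟨m (e i), h⟩ else i
  else fun i => i

/-- The boundary of a diagram `m` with `M/2 + 1` chords in the free abelian
group on diagrams with `M/2` chords: the alternating sum (chords ordered by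
their smaller endpoint) of the one-chord deletions of `m`. -/
noncomputable def boundarySum {M : ℕ} (m : Fin (M + 2) → Fin (M + 2)) :
    (Fin M → Fin M) →₀ ℤ :=
  ∑ a ∈ Finset.univ.filter (fun a => a < m a),
    ((-1 : ℤ) ^ ((Finset.univ.filter fun b => b < m b ∧ b < a).card)) •
      Finsupp.single (deleteChord m a) 1

/-!
STATEMENT 11: In the free abelian group on chord diagrams with 2g chords
(modulo diagrams with more than one cycle), the class of any chord diagram D
with more than one connected component is a boundary: there exists a diagram D'
with 2g+1 chords and exactly 2 cycles, obtained from D by adding a chord c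
crossing no chord of D and separating the components, such that the alternating
sum of the one-chord deletions of D' equals ±D modulo diagrams with more than
one cycle.

Formalization: D is a fixed-point-free involution of `Fin (2n+2)` with one
cycle (a 0-filling system) which is disconnected; D' is a diagram on two more
points whose chord at `p` crosses no other chord, has chords strictly on both
sides, and deletes to D; the alternating sum of one-chord deletions of D'
equals ε·D (ε = ±1) modulo the span of diagrams with at least two cycles.
-/

/-
A disconnected diagram `D` has a proper interval of consecutive points `l, …, r` that is a union
of chords. Take a split `A` (a chord-closed set of points crossing no chord outside it) of least
size: every chord outside `A` then has all of `A` on one side of it, so either the gap of `A`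
around a point outside `A`, or the hull of `A`, is such an interval. Inserting a new chord from
just before `l` to just after `r` gives `D'`. This chord crosses nothing, so its endpoints lie
in different cycles of `D'`, and as `D` has a single cycle these are the only two. Deleting the
new chord gives back `D`, while deleting any other chord keeps a non-crossing chord and hence
at least two cycles, so only the term of `D` survives in the boundary modulo such diagrams.
-/

lemma Equiv.Perm.SameCycle.mem_of_mapsTo {α : Type*} [Finite α] {σ : Equiv.Perm α}
    {S : Set α} (hS : Set.MapsTo σ S S) {x y : α} (h : σ.SameCycle x y) (hx : x ∈ S) : y ∈ S := by
  obtain ⟨n, rfl⟩ := h.exists_nat_pow_eq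
  exact hS.iterate n hx

namespace ChordDiagram

open Function Finset

variable {N : ℕ}

section CyclicOrder

lemma cdist_eq_ite (x y : Fin N) :
    cdist x y = if x.val ≤ y.val then y.val - x.val else y.val + N - x.val := by
  have := y.isLt
  unfold cdist
  split_ifs with h
  · rw [show y.val + N - x.val = y.val - x.val + N by omega, Nat.add_mod_right,
      Nat.mod_eq_of_lt (by omega)]
  · exact Nat.mod_eq_of_lt (by omega)

lemma cbetween_iff {x z y : Fin N} :
    CBetween x z y ↔ (x.val < z.val ∧ z.val < y.val) ∨ (y.val < x.val ∧ x.val < z.val) ∨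
      (z.val < y.val ∧ y.val < x.val) := by
  have := x.isLt; have := y.isLt; have := z.isLt
  simp only [CBetween, cdist_eq_ite]
  split_ifs <;> omega

lemma cnext_val (x : Fin N) : (cnext x).val = if x.val + 1 = N then 0 else x.val + 1 := by
  have := x.isLt
  change (x.val + 1) % N = _
  split_ifs with h
  · rw [h, Nat.mod_self]
  · exact Nat.mod_eq_of_lt (by omega)

lemma cbetween_comp_strictMono {K : ℕ} {f : Fin K → Fin N} (hf : StrictMono f) (x z y : Fin K) :
    CBetween (f x) (f z) (f y) ↔ CBetween x z y := by
  simp only [cbetween_iff, ← Fin.lt_def, hf.lt_iff_lt]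

lemma cbetween_cnext {x y w : Fin N} (hxy : x ≠ y) (hw : CBetween x w y ∨ w = x) :
    CBetween x (cnext w) y ∨ cnext w = y := by
  have := x.isLt; have := y.isLt; have := w.isLt
  have hxy' : x.val ≠ y.val := Fin.val_ne_of_ne hxy
  simp only [Fin.ext_iff, cbetween_iff, cnext_val] at hw ⊢
  split_ifs <;> omega

lemma not_crosses_iff {m : Fin N → Fin N} {a b : Fin N} :
    ¬ Crosses m a b ↔ (CBetween a b (m a) ↔ CBetween a (m b) (m a)) :=
  not_xor _ _

lemma not_crosses_comm {m : Fin N → Fin N} (hm : Involutive m) {a b : Fin N}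
    (h : ¬ Crosses m a b) : ¬ Crosses m b a := by
  have hinj : a.val = b.val ↔ (m a).val = (m b).val := by
    rw [← Fin.ext_iff, ← Fin.ext_iff, hm.injective.eq_iff]
  have hpartner : b.val = (m a).val ↔ a.val = (m b).val := by
    rw [← Fin.ext_iff, ← Fin.ext_iff]
    exact ⟨fun h => by rw [h, hm], fun h => by rw [h, hm]⟩
  have := a.isLt; have := b.isLt; have := (m a).isLt; have := (m b).isLt
  rw [not_crosses_iff, cbetween_iff, cbetween_iff] at h ⊢
  omega

lemma cnext_injective : Injective (cnext : Fin N → Fin N) := by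
  intro a b h
  have := a.isLt; have := b.isLt
  have h' := congrArg Fin.val h
  rw [cnext_val, cnext_val] at h'
  ext
  split_ifs at h' <;> omega

lemma not_cbetween_self_left (x y : Fin N) : ¬ CBetween x x y := by
  rw [cbetween_iff]; omega

lemma ne_of_cbetween {x z y : Fin N} (h : CBetween x z y) : x ≠ y := by
  rintro rfl
  rw [cbetween_iff] at h
  omega

lemma not_cbetween_iff {x z y : Fin N} (hxy : x ≠ y) (hzx : z ≠ x) (hzy : z ≠ y) :
    ¬ CBetween x z y ↔ CBetween y z x := by
  rw [Ne, Fin.ext_iff] at hxy hzx hzy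
  rw [cbetween_iff, cbetween_iff]
  omega

lemma crosses_comp_iff {K : ℕ} {m : Fin N → Fin N} {m' : Fin K → Fin K} {f : Fin K → Fin N}
    (hf : StrictMono f) (hcomm : ∀ i, m (f i) = f (m' i)) (a b : Fin K) :
    Crosses m (f a) (f b) ↔ Crosses m' a b := by
  simp only [Crosses, hcomm, cbetween_comp_strictMono hf]

lemma not_crosses_of_opposite_sides {m : Fin N → Fin N} {z x w : Fin N}
    (hx : CBetween z x (m z)) (hmx : CBetween z (m x) (m z)) (hw : CBetween (m z) w z)
    (hmw : CBetween (m z) (m w) z) :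
    ¬ Crosses m x w := by
  rw [cbetween_iff] at hx hmx hw hmw
  rw [not_crosses_iff, cbetween_iff, cbetween_iff]
  omega

end CyclicOrder

section Cycles

lemma sameCycle_iff_exists_iterate_lt (σ : Equiv.Perm (Fin N)) {x y : Fin N} :
    σ.SameCycle x y ↔ ∃ k < N, σ^[k] x = y := by
  constructor
  · intro h
    obtain ⟨n, rfl⟩ := h.exists_nat_pow_eq
    have hpos := minimalPeriod_pos_of_mem_periodicPts (σ.injective.mem_periodicPts x)
    refine ⟨n % minimalPeriod σ x, ?_, by rw [iterate_mod_minimalPeriod_eq, Equiv.Perm.coe_pow]⟩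
    exact (Nat.mod_lt _ hpos).trans_le (minimalPeriod_le_card.trans_eq (Fintype.card_fin N))
  · rintro ⟨k, -, rfl⟩
    exact ⟨k, by rw [zpow_natCast, Equiv.Perm.coe_pow]⟩

lemma exists_sameCycle_min (σ : Equiv.Perm (Fin N)) (x : Fin N) :
    ∃ i, (∀ y, σ.SameCycle i y → i ≤ y) ∧ σ.SameCycle i x := by
  classical
  obtain ⟨i, hi, hmin⟩ :=
    (univ.filter (σ.SameCycle x)).exists_min_image id ⟨x, by simp [Equiv.Perm.SameCycle.refl]⟩
  rw [mem_filter] at hi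
  exact ⟨i, fun y hy => hmin y (by simpa using hi.2.trans hy), hi.2.symm⟩

variable {m : Fin N → Fin N} (hm : Involutive m)
include hm

lemma bperm_injective : Injective (bperm m) :=
  fun _ _ h => hm.injective (cnext_injective h)

noncomputable def bpermPerm : Equiv.Perm (Fin N) :=
  Equiv.ofBijective (bperm m) (bperm_injective hm).bijective_of_finite

@[simp]
lemma coe_bpermPerm : ⇑(bpermPerm hm) = bperm m := rfl

lemma forall_iterate_not_lt_iff {i : Fin N} :
    (∀ k ∈ range N, ¬ (bperm m)^[k] i < i) ↔ ∀ y, (bpermPerm hm).SameCycle i y → i ≤ y := by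
  simp only [sameCycle_iff_exists_iterate_lt, coe_bpermPerm, mem_range, not_lt]
  exact ⟨fun h y ⟨k, hk, hy⟩ => hy ▸ h k hk, fun h k hk => h _ ⟨k, hk, rfl⟩⟩

lemma two_le_numCycles {a b : Fin N} (hab : ¬ (bpermPerm hm).SameCycle a b) :
    2 ≤ numCycles m := by
  obtain ⟨i, hi, hia⟩ := exists_sameCycle_min (bpermPerm hm) a
  obtain ⟨j, hj, hjb⟩ := exists_sameCycle_min (bpermPerm hm) b
  have hij : i ≠ j := by
    rintro rfl
    exact hab (hia.symm.trans hjb)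
  calc 2 = #{i, j} := (card_pair hij).symm
    _ ≤ numCycles m := card_le_card <| by
      simp only [insert_subset_iff, singleton_subset_iff, mem_filter, mem_univ, true_and,
        forall_iterate_not_lt_iff hm]
      exact ⟨hi, hj⟩

lemma sameCycle_of_numCycles_eq_one (h : numCycles m = 1) (a b : Fin N) :
    (bpermPerm hm).SameCycle a b := by
  by_contra hab
  have := two_le_numCycles hm hab
  omega

lemma numCycles_eq_two {a b : Fin N} (hab : ¬ (bpermPerm hm).SameCycle a b)
    (hcover : ∀ z, (bpermPerm hm).SameCycle a z ∨ (bpermPerm hm).SameCycle b z) :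
    numCycles m = 2 := by
  obtain ⟨i, hi, hia⟩ := exists_sameCycle_min (bpermPerm hm) a
  obtain ⟨j, hj, hjb⟩ := exists_sameCycle_min (bpermPerm hm) b
  refine le_antisymm ?_ (two_le_numCycles hm hab)
  calc numCycles m ≤ #{i, j} := card_le_card fun x hx => by
        rw [mem_filter, forall_iterate_not_lt_iff hm] at hx
        rw [mem_insert, mem_singleton]
        rcases hcover x with h | h
        · exact Or.inl (le_antisymm (hx.2 i (hia.trans h).symm) (hi x (hia.trans h)))
        · exact Or.inr (le_antisymm (hx.2 j (hjb.trans h).symm) (hj x (hjb.trans h)))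
    _ ≤ 2 := card_le_two

lemma not_sameCycle_of_forall_not_crosses {p : Fin N} (hp : m p ≠ p)
    (h : ∀ b, ¬ Crosses m p b) : ¬ (bpermPerm hm).SameCycle (m p) p := by
  set arc : Set (Fin N) := {z | CBetween p z (m p) ∨ z = m p}
  have hmaps : Set.MapsTo (bpermPerm hm) arc arc := by
    rintro z (hz | rfl)
    · exact cbetween_cnext hp.symm (Or.inl ((not_crosses_iff.mp (h z)).mp hz))
    · change CBetween p (cnext (m (m p))) (m p) ∨ _
      exact cbetween_cnext hp.symm (Or.inr (hm p))
  intro hc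
  rcases hc.mem_of_mapsTo hmaps (Or.inr rfl) with hpp | hpp
  · exact not_cbetween_self_left p (m p) hpp
  · exact hp hpp.symm

lemma two_le_numCycles_of_forall_not_crosses {p : Fin N} (hp : m p ≠ p)
    (h : ∀ b, ¬ Crosses m p b) : 2 ≤ numCycles m :=
  two_le_numCycles hm (not_sameCycle_of_forall_not_crosses hm hp h)

end Cycles

section DeleteChord

variable {M : ℕ} {m : Fin (M + 2) → Fin (M + 2)} {a : Fin (M + 2)}

lemma card_erase_chord (ha : m a ≠ a) : #((univ.erase a).erase (m a)) = M := by
  rw [card_erase_of_mem (mem_erase.mpr ⟨ha, mem_univ _⟩), card_erase_of_mem (mem_univ _),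
    card_univ, Fintype.card_fin]
  rfl

lemma apply_deleteChord (hm : Involutive m) (ha : m a ≠ a) {f : Fin M → Fin (M + 2)}
    (hf : StrictMono f) (hfa : ∀ i, f i ≠ a) (hfma : ∀ i, f i ≠ m a) (i : Fin M) :
    f (deleteChord m a i) = m (f i) := by
  set s := (univ.erase a).erase (m a)
  have hs := card_erase_chord ha
  have hfs : ∀ j, f j ∈ s := fun j => by simp [s, hfa, hfma]
  have hfe : ∀ j, (s.orderIsoOfFin hs j : Fin (M + 2)) = f j := fun j => by
    rw [coe_orderIsoOfFin_apply, ← orderEmbOfFin_unique hs hfs hf]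
  have hmf : m (s.orderIsoOfFin hs i) ∈ s := by
    rw [hfe]
    simp only [s, mem_erase, mem_univ, and_true, ne_eq, hm.injective.eq_iff]
    exact ⟨hfa i, fun h => hfma i (by rw [← h, hm])⟩
  have hdel : deleteChord m a i = (s.orderIsoOfFin hs).symm ⟨_, hmf⟩ := by
    simp only [deleteChord, dif_pos hs]
    exact dif_pos hmf
  rw [← hfe, hdel, OrderIso.apply_symm_apply]
  exact congrArg m (hfe i)

lemma two_le_numCycles_deleteChord (hm : Involutive m) (hfix : ∀ i, m i ≠ i) {p : Fin (M + 2)}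
    (hp : ∀ b, ¬ Crosses m p b) (hap : a ≠ p) (hamp : a ≠ m p) :
    2 ≤ numCycles (deleteChord m a) := by
  set s := (univ.erase a).erase (m a)
  have hs := card_erase_chord (hfix a)
  set e := s.orderEmbOfFin hs
  have hes : ∀ i, e i ∈ s := orderEmbOfFin_mem s hs
  have hcomm : ∀ i, m (e i) = e (deleteChord m a i) := fun i =>
    (apply_deleteChord hm (hfix a) e.strictMono (fun i h => by simpa [s, h] using hes i)
      (fun i h => by simpa [s, h] using hes i) i).symm
  obtain ⟨P, rfl⟩ : p ∈ Set.range e := by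
    rw [range_orderEmbOfFin]
    simp only [s, coe_erase, coe_univ, Set.mem_sdiff, Set.mem_univ, Set.mem_singleton_iff]
    exact ⟨⟨trivial, hap.symm⟩, fun h => hamp (by rw [h, hm])⟩
  have hm' : Involutive (deleteChord m a) := fun i => e.injective (by rw [← hcomm, ← hcomm, hm])
  refine two_le_numCycles_of_forall_not_crosses hm' (p := P) (fun h => hfix (e P) ?_) ?_
  · rw [hcomm, h]
  · intro b
    rw [← crosses_comp_iff e.strictMono hcomm]
    exact hp (e b)

end DeleteChord

lemma boundarySum_sub_mem_span {M : ℕ} {m : Fin (M + 2) → Fin (M + 2)} {p : Fin (M + 2)}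
    (hp : p < m p) (hrest : ∀ a, a < m a → a ≠ p → 2 ≤ numCycles (deleteChord m a)) :
    boundarySum m - (-1 : ℤ) ^ #{b | b < m b ∧ b < p} • Finsupp.single (deleteChord m p) 1 ∈
      Submodule.span ℤ {f : (Fin M → Fin M) →₀ ℤ |
        ∃ m', 2 ≤ numCycles m' ∧ f = Finsupp.single m' 1} := by
  rw [boundarySum, ← add_sum_erase _ _ (mem_filter.mpr ⟨mem_univ p, hp⟩), add_sub_cancel_left]
  refine Submodule.sum_mem _ fun a ha => Submodule.smul_mem _ _ (Submodule.subset_span ⟨_, ?_, rfl⟩)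
  obtain ⟨hap, ha⟩ := mem_erase.mp ha
  exact hrest a (mem_filter.mp ha).2 hap

section Interval

variable {D : Fin N → Fin N}

/-- `Disconnected D` unfolds to `∃ A, IsSplit D A`. -/
def IsSplit (D : Fin N → Fin N) (A : Finset (Fin N)) : Prop :=
  A.Nonempty ∧ Aᶜ.Nonempty ∧ (∀ i ∈ A, D i ∈ A) ∧ ∀ a ∈ A, ∀ b ∈ Aᶜ, ¬ Crosses D a b

lemma exists_isSplit_minimal (h : Disconnected D) :
    ∃ A, IsSplit D A ∧ ∀ B, IsSplit D B → #A ≤ #B := by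
  classical
  obtain ⟨A₀, hA₀⟩ := h
  obtain ⟨A, hA, hmin⟩ :=
    (univ.filter (IsSplit D)).exists_min_image card ⟨A₀, mem_filter.mpr ⟨mem_univ _, hA₀⟩⟩
  exact ⟨A, (mem_filter.mp hA).2, fun B hB => hmin B (by simpa using hB)⟩

/-- Otherwise the points of `A` on one side of the chord at `z` would form a smaller split. -/
lemma IsSplit.cbetween_of_minimal (hD : Involutive D) {A : Finset (Fin N)} (hA : IsSplit D A)
    (hmin : ∀ B, IsSplit D B → #A ≤ #B) {z a b : Fin N} (hz : z ∉ A) (ha : a ∈ A) (hb : b ∈ A)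
    (hza : CBetween z a (D z)) : CBetween z b (D z) := by
  classical
  obtain ⟨-, -, hclosed, hnc⟩ := hA
  have hside : ∀ x ∈ A, CBetween z x (D z) ↔ CBetween z (D x) (D z) := fun x hx =>
    not_crosses_iff.mp (not_crosses_comm hD (hnc x hx z (mem_compl.mpr hz)))
  have hDz : D z ∉ A := fun h => hz (hD z ▸ hclosed _ h)
  have hne : ∀ x ∈ A, x ≠ z ∧ x ≠ D z := fun x hx =>
    ⟨fun h => hz (h ▸ hx), fun h => hDz (h ▸ hx)⟩
  have hother : ∀ x ∈ A, ¬ CBetween z x (D z) → CBetween (D z) x z := fun x hx h =>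
    (not_cbetween_iff (ne_of_cbetween hza) (hne x hx).1 (hne x hx).2).mp h
  by_contra hzb
  set B := A.filter fun x => CBetween z x (D z)
  have hB : IsSplit D B := by
    refine ⟨⟨a, mem_filter.mpr ⟨ha, hza⟩⟩, ⟨z, by simp [B, hz]⟩, fun x hx => ?_,
      fun x hx y hy => ?_⟩
    · rw [mem_filter] at hx ⊢
      exact ⟨hclosed x hx.1, (hside x hx.1).mp hx.2⟩
    · rw [mem_filter] at hx
      rw [mem_compl, mem_filter, not_and] at hy
      by_cases hyA : y ∈ A
      · have hy' := hy hyA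
        exact not_crosses_of_opposite_sides hx.2 ((hside x hx.1).mp hx.2) (hother y hyA hy')
          (hother (D y) (hclosed y hyA) (fun h => hy' ((hside y hyA).mpr h)))
      · exact hnc x hx.1 y (mem_compl.mpr hyA)
  have hlt : #B < #A := card_lt_card (filter_ssubset.mpr ⟨b, hb, hzb⟩)
  exact absurd (hmin B hB) (not_le.mpr hlt)

lemma IsSplit.apply_mem_Ioo_of_minimal (hD : Involutive D) {A : Finset (Fin N)}
    (hA : IsSplit D A) (hmin : ∀ B, IsSplit D B → #A ≤ #B) {z a b : Fin N} (hz : z ∉ A)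
    (ha : a ∈ A) (hb : b ∈ A) (haz : a < z) (hzb : z < b) : a < D z ∧ D z < b := by
  have hsame : CBetween z a (D z) ↔ CBetween z b (D z) :=
    ⟨hA.cbetween_of_minimal hD hmin hz ha hb, hA.cbetween_of_minimal hD hmin hz hb ha⟩
  have hDz : D z ∉ A := fun h => hz (hD z ▸ hA.2.2.1 _ h)
  have hDa : (D z).val ≠ a.val := fun h => hDz (Fin.ext h ▸ ha)
  have hDb : (D z).val ≠ b.val := fun h => hDz (Fin.ext h ▸ hb)
  rw [cbetween_iff, cbetween_iff] at hsame
  rw [Fin.lt_def] at haz hzb ⊢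
  rw [Fin.lt_def]
  omega

lemma exists_mapsTo_Icc_of_gap {A : Finset (Fin N)}
    (hA : ∀ z ∉ A, ∀ a ∈ A, ∀ b ∈ A, a < z → z < b → a < D z ∧ D z < b) {g a b : Fin N}
    (hg : g ∉ A) (ha : a ∈ A) (hb : b ∈ A) (hag : a < g) (hgb : g < b) :
    ∃ l r : Fin N, l ≤ r ∧ 0 < l.val ∧ Set.MapsTo D (Set.Icc l r) (Set.Icc l r) := by
  classical
  obtain ⟨c₁, hc₁, hc₁max⟩ := (A.filter (· < g)).exists_max_image id ⟨a, by simp [ha, hag]⟩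
  obtain ⟨c₂, hc₂, hc₂min⟩ := (A.filter (g < ·)).exists_min_image id ⟨b, by simp [hb, hgb]⟩
  rw [mem_filter] at hc₁ hc₂
  have hout : ∀ z, c₁ < z → z < c₂ → z ∉ A := by
    intro z h₁ h₂ hz
    rcases lt_trichotomy z g with hzg | rfl | hgz
    · exact absurd (hc₁max z (mem_filter.mpr ⟨hz, hzg⟩)) (not_le.mpr h₁)
    · exact hg hz
    · exact absurd (hc₂min z (mem_filter.mpr ⟨hz, hgz⟩)) (not_le.mpr h₂)
  have hc₁₂ : c₁.val < g.val ∧ g.val < c₂.val := ⟨hc₁.2, hc₂.2⟩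
  refine ⟨⟨c₁ + 1, by omega⟩, ⟨c₂ - 1, by omega⟩, Fin.le_def.mpr (by simp only; omega),
    by simp only; omega, ?_⟩
  rintro z ⟨h₁, h₂⟩
  simp only [Fin.le_def] at h₁ h₂
  have hz := hA z (hout z (Fin.lt_def.mpr (by omega)) (Fin.lt_def.mpr (by omega))) c₁ hc₁.1 c₂
    hc₂.1 (Fin.lt_def.mpr (by omega)) (Fin.lt_def.mpr (by omega))
  simp only [Set.mem_Icc, Fin.le_def, Fin.lt_def] at hz ⊢
  omega

lemma exists_mapsTo_Icc_of_hull {A : Finset (Fin N)}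
    (hA : ∀ z ∉ A, ∀ a ∈ A, ∀ b ∈ A, a < z → z < b → a < D z ∧ D z < b)
    (hclosed : ∀ i ∈ A, D i ∈ A) (hne : A.Nonempty) {g : Fin N} (hg : g ∉ A)
    (hside : ¬ ((∃ a ∈ A, a < g) ∧ ∃ b ∈ A, g < b)) :
    ∃ l r : Fin N, l ≤ r ∧ (0 < l.val ∨ r.val + 1 < N) ∧
      Set.MapsTo D (Set.Icc l r) (Set.Icc l r) := by
  have hX := A.min'_mem hne
  have hY := A.max'_mem hne
  refine ⟨A.min' hne, A.max' hne, min'_le_max' _ _, ?_, ?_⟩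
  · by_contra hfull
    have hXg : A.min' hne < g := lt_of_le_of_ne (Fin.le_def.mpr (by omega)) (fun h => hg (h ▸ hX))
    have hgY : g < A.max' hne := lt_of_le_of_ne (Fin.le_def.mpr (by omega)) (fun h => hg (h ▸ hY))
    exact hside ⟨⟨_, hX, hXg⟩, ⟨_, hY, hgY⟩⟩
  · rintro z ⟨h₁, h₂⟩
    by_cases hz : z ∈ A
    · exact ⟨min'_le _ _ (hclosed z hz), le_max' _ _ (hclosed z hz)⟩
    · have hz' := hA z hz _ hX _ hY (lt_of_le_of_ne h₁ (fun h => hz (h ▸ hX)))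
        (lt_of_le_of_ne h₂ (fun h => hz (h ▸ hY)))
      exact ⟨hz'.1.le, hz'.2.le⟩

/-- The interval is the gap of a minimal split `A` around a point `g ∉ A` if `A` has points on
both sides of `g`, and the hull of `A` otherwise. -/
lemma exists_mapsTo_Icc (hD : Involutive D) (h : Disconnected D) :
    ∃ l r : Fin N, l ≤ r ∧ (0 < l.val ∨ r.val + 1 < N) ∧
      Set.MapsTo D (Set.Icc l r) (Set.Icc l r) := by
  obtain ⟨A, hA, hmin⟩ := exists_isSplit_minimal h
  obtain ⟨g, hg⟩ := hA.2.1
  rw [mem_compl] at hg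
  have hbetween : ∀ z ∉ A, ∀ a ∈ A, ∀ b ∈ A, a < z → z < b → a < D z ∧ D z < b :=
    fun z hz a ha b hb => hA.apply_mem_Ioo_of_minimal hD hmin hz ha hb
  by_cases hgap : (∃ a ∈ A, a < g) ∧ ∃ b ∈ A, g < b
  · obtain ⟨⟨a, ha, hag⟩, ⟨b, hb, hgb⟩⟩ := hgap
    obtain ⟨l, r, hlr, hl, hmaps⟩ := exists_mapsTo_Icc_of_gap hbetween hg ha hb hag hgb
    exact ⟨l, r, hlr, Or.inl hl, hmaps⟩
  · exact exists_mapsTo_Icc_of_hull hbetween hA.2.2.1 hA.1 hg hgap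

end Interval

section AddChord

variable (l r : Fin N)

/-- The order embedding `Fin N → Fin (N + 2)` missing the positions `l` and `r + 2`. -/
def insertTwo (i : Fin N) : Fin (N + 2) :=
  ⟨if i.val < l.val then i.val else if i.val ≤ r.val then i.val + 1 else i.val + 2,
    by split_ifs <;> omega⟩

/-- `D` with a new chord from position `l` to position `r + 2`, inserted around the points
`l, …, r` of `D`. -/
noncomputable def addChord (D : Fin N → Fin N) : Fin (N + 2) → Fin (N + 2) :=
  extend (insertTwo l r) (insertTwo l r ∘ D)
    fun z => if z = l.castAdd 2 then r.addNat 2 else l.castAdd 2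

variable {l r}

lemma insertTwo_strictMono : StrictMono (insertTwo l r) := by
  intro a b h
  rw [Fin.lt_def] at h ⊢
  simp only [insertTwo]
  split_ifs <;> omega

lemma insertTwo_ne_castAdd (i : Fin N) : insertTwo l r i ≠ l.castAdd 2 := by
  simp only [insertTwo, ne_eq, Fin.ext_iff, Fin.val_castAdd]
  split_ifs <;> omega

lemma insertTwo_ne_addNat (hlr : l ≤ r) (i : Fin N) : insertTwo l r i ≠ r.addNat 2 := by
  rw [Fin.le_def] at hlr
  simp only [insertTwo, ne_eq, Fin.ext_iff, Fin.val_addNat]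
  split_ifs <;> omega

lemma addNat_ne_castAdd (hlr : l ≤ r) : r.addNat 2 ≠ l.castAdd 2 := by
  rw [Fin.le_def] at hlr
  simp only [ne_eq, Fin.ext_iff, Fin.val_castAdd, Fin.val_addNat]
  omega

lemma eq_castAdd_or_eq_addNat_or_exists_insertTwo (hlr : l ≤ r) (z : Fin (N + 2)) :
    z = l.castAdd 2 ∨ z = r.addNat 2 ∨ ∃ i, insertTwo l r i = z := by
  rw [Fin.le_def] at hlr
  simp only [Fin.ext_iff, Fin.val_castAdd, Fin.val_addNat, insertTwo]
  by_cases hzl : z.val < l.val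
  · exact Or.inr (Or.inr ⟨⟨z, by omega⟩, by simp [hzl]⟩)
  by_cases hzr : z.val ≤ r.val + 1
  · rcases eq_or_ne z.val l.val with h | h
    · exact Or.inl h
    · exact Or.inr (Or.inr ⟨⟨z - 1, by omega⟩, by simp only; split_ifs <;> omega⟩)
  rcases eq_or_ne z.val (r.val + 2) with h | h
  · exact Or.inr (Or.inl h)
  · exact Or.inr (Or.inr ⟨⟨z - 2, by omega⟩, by simp only; split_ifs <;> omega⟩)

lemma cbetween_insertTwo (hlr : l ≤ r) (i : Fin N) :
    CBetween (l.castAdd 2) (insertTwo l r i) (r.addNat 2) ↔ l ≤ i ∧ i ≤ r := by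
  rw [Fin.le_def] at hlr
  simp only [cbetween_iff, insertTwo, Fin.val_castAdd, Fin.val_addNat, Fin.le_def]
  split_ifs <;> omega

lemma insertTwo_self_left (hlr : l ≤ r) : insertTwo l r l = cnext (l.castAdd 2) := by
  rw [Fin.le_def] at hlr
  ext
  simp only [insertTwo, cnext_val, Fin.val_castAdd]
  split_ifs <;> omega

lemma insertTwo_cnext (hlr : l ≤ r) (v : Fin N) :
    insertTwo l r (cnext v) = cnext (insertTwo l r v) ∨
      insertTwo l r (cnext v) = cnext (l.castAdd 2) ∨
      insertTwo l r (cnext v) = cnext (r.addNat 2) := by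
  rw [Fin.le_def] at hlr
  have := v.isLt
  simp only [Fin.ext_iff, insertTwo, cnext_val, Fin.val_castAdd, Fin.val_addNat]
  split_ifs <;> omega

variable {D : Fin N → Fin N}

@[simp]
lemma addChord_insertTwo (i : Fin N) : addChord l r D (insertTwo l r i) = insertTwo l r (D i) :=
  insertTwo_strictMono.injective.extend_apply _ _ i

@[simp]
lemma addChord_castAdd : addChord l r D (l.castAdd 2) = r.addNat 2 := by
  rw [addChord, extend_apply' _ _ _ fun ⟨i, hi⟩ => insertTwo_ne_castAdd i hi, if_pos rfl]

lemma addChord_addNat (hlr : l ≤ r) : addChord l r D (r.addNat 2) = l.castAdd 2 := by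
  rw [addChord, extend_apply' _ _ _ fun ⟨i, hi⟩ => insertTwo_ne_addNat hlr i hi,
    if_neg (addNat_ne_castAdd hlr)]

lemma addChord_involutive (hD : Involutive D) (hlr : l ≤ r) : Involutive (addChord l r D) := by
  intro z
  rcases eq_castAdd_or_eq_addNat_or_exists_insertTwo hlr z with rfl | rfl | ⟨i, rfl⟩
  · rw [addChord_castAdd, addChord_addNat hlr]
  · rw [addChord_addNat hlr, addChord_castAdd]
  · rw [addChord_insertTwo, addChord_insertTwo, hD]

lemma addChord_castAdd_ne_self (hlr : l ≤ r) : addChord l r D (l.castAdd 2) ≠ l.castAdd 2 := by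
  rw [addChord_castAdd]
  exact addNat_ne_castAdd hlr

lemma addChord_ne_self (hfix : ∀ i, D i ≠ i) (hlr : l ≤ r) (z : Fin (N + 2)) :
    addChord l r D z ≠ z := by
  rcases eq_castAdd_or_eq_addNat_or_exists_insertTwo hlr z with rfl | rfl | ⟨i, rfl⟩
  · exact addChord_castAdd_ne_self hlr
  · rw [addChord_addNat hlr]
    exact (addNat_ne_castAdd hlr).symm
  · rw [addChord_insertTwo]
    exact fun h => hfix i (insertTwo_strictMono.injective h)

lemma not_crosses_addChord (hD : Involutive D) (hlr : l ≤ r)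
    (hmaps : Set.MapsTo D (Set.Icc l r) (Set.Icc l r)) (b : Fin (N + 2)) :
    ¬ Crosses (addChord l r D) (l.castAdd 2) b := by
  rw [not_crosses_iff, addChord_castAdd]
  rcases eq_castAdd_or_eq_addNat_or_exists_insertTwo hlr b with rfl | rfl | ⟨i, rfl⟩
  · rw [addChord_castAdd]
    simp only [cbetween_iff]
    omega
  · rw [addChord_addNat hlr]
    simp only [cbetween_iff]
    omega
  · rw [addChord_insertTwo, cbetween_insertTwo hlr, cbetween_insertTwo hlr]
    exact ⟨fun h => hmaps h, fun h => hD i ▸ hmaps h⟩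

lemma deleteChord_addChord (hD : Involutive D) (hlr : l ≤ r) :
    deleteChord (addChord l r D) (l.castAdd 2) = D := by
  have hf := insertTwo_strictMono (l := l) (r := r)
  have hfr : ∀ i, insertTwo l r i ≠ addChord l r D (l.castAdd 2) := by
    rw [addChord_castAdd]
    exact insertTwo_ne_addNat hlr
  funext i
  apply hf.injective
  rw [apply_deleteChord (addChord_involutive hD hlr) (addChord_castAdd_ne_self hlr) hf
    insertTwo_ne_castAdd hfr, addChord_insertTwo]

/-- The endpoints of the new chord lie in different cycles since it crosses nothing, and following
the single cycle of `D` shows that every point lies in one of these two. -/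
lemma numCycles_addChord (hD : Involutive D) (hone : numCycles D = 1)
    (hlr : l ≤ r) (hmaps : Set.MapsTo D (Set.Icc l r) (Set.Icc l r)) :
    numCycles (addChord l r D) = 2 := by
  have hD' := addChord_involutive hD hlr
  set σ := bpermPerm hD'
  have hσl : σ (r.addNat 2) = cnext (l.castAdd 2) := congrArg cnext (addChord_addNat hlr)
  have hσr : σ (l.castAdd 2) = cnext (r.addNat 2) := congrArg cnext addChord_castAdd
  set T : Set (Fin N) := {i | σ.SameCycle (l.castAdd 2) (insertTwo l r i) ∨
    σ.SameCycle (r.addNat 2) (insertTwo l r i)}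
  have hT : Set.MapsTo (bpermPerm hD) T T := by
    intro w hw
    have hσw : σ (insertTwo l r w) = cnext (insertTwo l r (D w)) :=
      congrArg cnext (addChord_insertTwo w)
    change σ.SameCycle _ (insertTwo l r (cnext (D w))) ∨
      σ.SameCycle _ (insertTwo l r (cnext (D w)))
    rcases insertTwo_cnext hlr (D w) with h | h | h <;> rw [h]
    · rw [← hσw, Equiv.Perm.sameCycle_apply_right, Equiv.Perm.sameCycle_apply_right]
      exact hw
    · rw [← hσl]
      exact Or.inr (Equiv.Perm.sameCycle_apply_right.mpr (.refl _ _))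
    · rw [← hσr]
      exact Or.inl (Equiv.Perm.sameCycle_apply_right.mpr (.refl _ _))
  have hlT : l ∈ T := by
    change _ ∨ σ.SameCycle _ (insertTwo l r l)
    rw [insertTwo_self_left hlr, ← hσl]
    exact Or.inr (Equiv.Perm.sameCycle_apply_right.mpr (.refl _ _))
  refine numCycles_eq_two hD' (a := l.castAdd 2) (b := r.addNat 2) ?_ fun z => ?_
  · have h := not_sameCycle_of_forall_not_crosses hD' (addChord_castAdd_ne_self hlr)
      (not_crosses_addChord hD hlr hmaps)
    rw [addChord_castAdd] at h
    exact fun h' => h h'.symm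
  · rcases eq_castAdd_or_eq_addNat_or_exists_insertTwo hlr z with rfl | rfl | ⟨i, rfl⟩
    · exact Or.inl (Equiv.Perm.SameCycle.refl _ _)
    · exact Or.inr (Equiv.Perm.SameCycle.refl _ _)
    · exact (sameCycle_of_numCycles_eq_one hD hone l i).mem_of_mapsTo hT hlT

lemma exists_cbetween_addNat_castAdd (hlr : l ≤ r) (hproper : 0 < l.val ∨ r.val + 1 < N) :
    ∃ j, CBetween (r.addNat 2) j (l.castAdd 2) := by
  rw [Fin.le_def] at hlr
  rcases hproper with h | h
  · exact ⟨⟨0, by omega⟩, by simp only [cbetween_iff, Fin.val_castAdd, Fin.val_addNat]; omega⟩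
  · exact ⟨⟨N + 1, by omega⟩, by simp only [cbetween_iff, Fin.val_castAdd, Fin.val_addNat]; omega⟩

end AddChord

end ChordDiagram

open ChordDiagram

theorem disconnected_zero_filling_is_boundary {n : ℕ}
    (D : Fin (2 * n + 2) → Fin (2 * n + 2))
    (hinv : Function.Involutive D) (hfix : ∀ i, D i ≠ i)
    (hone : numCycles D = 1) (hdisc : Disconnected D) :
    ∃ (D' : Fin (2 * n + 2 + 2) → Fin (2 * n + 2 + 2)) (p : Fin (2 * n + 2 + 2)),
      Function.Involutive D' ∧ (∀ i, D' i ≠ i) ∧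
      numCycles D' = 2 ∧
      (∀ b, ¬ Crosses D' p b) ∧
      (∃ i, CBetween p i (D' p)) ∧ (∃ j, CBetween (D' p) j p) ∧
      deleteChord D' p = D ∧
      ∃ ε : ℤ, (ε = 1 ∨ ε = -1) ∧
        boundarySum D' - ε • Finsupp.single D 1 ∈
          Submodule.span ℤ {f : (Fin (2 * n + 2) → Fin (2 * n + 2)) →₀ ℤ |
            ∃ m, 2 ≤ numCycles m ∧ f = Finsupp.single m 1} := by
  obtain ⟨l, r, hlr, hproper, hmaps⟩ := exists_mapsTo_Icc hinv hdisc
  have hD' := addChord_involutive hinv hlr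
  have hnc := not_crosses_addChord hinv hlr hmaps
  have hdel := deleteChord_addChord hinv hlr
  have hp : l.castAdd 2 < addChord l r D (l.castAdd 2) := by
    rw [addChord_castAdd, Fin.lt_def, Fin.val_castAdd, Fin.val_addNat]
    have := Fin.le_def.mp hlr
    omega
  refine ⟨addChord l r D, l.castAdd 2, hD', addChord_ne_self hfix hlr,
    numCycles_addChord hinv hone hlr hmaps, hnc, ⟨insertTwo l r l, ?_⟩, ?_, hdel, _,
    neg_one_pow_eq_or ℤ _, hdel ▸ boundarySum_sub_mem_span hp fun a ha hap => ?_⟩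
  · rw [addChord_castAdd, cbetween_insertTwo hlr]
    exact ⟨le_rfl, hlr⟩
  · rw [addChord_castAdd]
    exact exists_cbetween_addNat_castAdd hlr hproper
  · refine two_le_numCycles_deleteChord hD' (addChord_ne_self hfix hlr) hnc hap ?_
    rintro rfl
    rw [hD'] at ha
    exact lt_asymm ha hp
end

section
/- If a chord c in a chord diagram crosses no other chord, then the two sides of c lie in two distinct cycles of the diagram; consequently, a chord diagram with exactly one cycle (a 0-filling system) has no chord crossing no other chord unless it is the unique 1-chord diagram. -/
open Set

section CyclicOrder

variable {N : ℕ}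

lemma cdist_eq_ite (x y : Fin N) :
    cdist x y = if x.val ≤ y.val then y.val - x.val else y.val + N - x.val := by
  have hx := x.isLt
  unfold cdist
  split_ifs with h
  · rw [show y.val + N - x.val = (y.val - x.val) + N by omega, Nat.add_mod_right,
      Nat.mod_eq_of_lt (by omega)]
  · exact Nat.mod_eq_of_lt (by omega)

lemma val_cnext (x : Fin N) : (cnext x).val = if x.val + 1 = N then 0 else x.val + 1 := by
  have hx := x.isLt
  show (x.val + 1) % N = _
  split_ifs with h
  · rw [h, Nat.mod_self]
  · exact Nat.mod_eq_of_lt (by omega)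

lemma cdist_self (x : Fin N) : cdist x x = 0 := by
  simp [cdist]

def arcIoc (x y : Fin N) : Set (Fin N) := {z | 0 < cdist x z ∧ cdist x z ≤ cdist x y}

lemma left_notMem_arcIoc (x y : Fin N) : x ∉ arcIoc x y := by
  rintro ⟨h, -⟩
  exact h.ne (cdist_self x).symm

lemma right_mem_arcIoc {x y : Fin N} (hxy : x ≠ y) : y ∈ arcIoc x y := by
  have hxy' := Fin.val_ne_of_ne hxy
  have := x.isLt
  refine ⟨?_, le_rfl⟩
  simp only [cdist_eq_ite]
  split_ifs <;> omega

lemma eq_or_cbetween_of_mem_arcIoc {x y z : Fin N} (hz : z ∈ arcIoc x y) :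
    z = y ∨ CBetween x z y := by
  obtain ⟨h₁, h₂⟩ := hz
  rcases h₂.lt_or_eq with h₂ | h₂
  · exact Or.inr ⟨h₁, h₂⟩
  · left
    have := x.isLt; have := y.isLt; have := z.isLt
    ext
    simp only [cdist_eq_ite] at h₂
    split_ifs at h₂ <;> omega

lemma cbetween_swap_iff {x y z : Fin N} (hxy : x ≠ y) (hzx : z ≠ x) (hzy : z ≠ y) :
    CBetween y z x ↔ ¬ CBetween x z y := by
  have := Fin.val_ne_of_ne hxy; have := Fin.val_ne_of_ne hzx; have := Fin.val_ne_of_ne hzy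
  have := x.isLt; have := y.isLt; have := z.isLt
  simp only [CBetween, cdist_eq_ite]
  split_ifs <;> omega

lemma CBetween.ne_left {x y z : Fin N} (h : CBetween x z y) : z ≠ x := by
  rintro rfl
  exact h.1.ne (cdist_self _).symm

lemma CBetween.ne_right {x y z : Fin N} (h : CBetween x z y) : z ≠ y := by
  rintro rfl
  exact h.2.false

lemma CBetween.left_ne_right {x y z : Fin N} (h : CBetween x z y) : x ≠ y := by
  rintro rfl
  exact (h.1.trans h.2).ne (cdist_self _).symm

lemma cnext_mem_arcIoc {x y : Fin N} (hxy : x ≠ y) : cnext x ∈ arcIoc x y := by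
  have := Fin.val_ne_of_ne hxy
  have := x.isLt; have := y.isLt
  simp only [arcIoc, mem_ofPred_eq, cdist_eq_ite, val_cnext]
  split_ifs <;> omega

lemma CBetween.cnext_mem_arcIoc {x y z : Fin N} (h : CBetween x z y) :
    cnext z ∈ arcIoc x y := by
  obtain ⟨h₁, h₂⟩ := h
  have := x.isLt; have := y.isLt; have := z.isLt
  simp only [cdist_eq_ite] at h₁ h₂
  simp only [arcIoc, mem_ofPred_eq, cdist_eq_ite, val_cnext]
  split_ifs at h₁ h₂ ⊢ <;> omega

end CyclicOrder

section ChordDiagram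

variable {N : ℕ} {m : Fin N → Fin N}

lemma CBetween.partner_of_forall_not_crosses (hinv : Function.Involutive m) {a z : Fin N}
    (hnc : ∀ b, ¬ Crosses m a b) (hz : CBetween (m a) z a) : CBetween (m a) (m z) a := by
  have hza := hz.ne_right
  have hzma := hz.ne_left
  have hmza : m z ≠ a := fun h => hzma (by rw [← h, hinv z])
  have hmzma : m z ≠ m a := fun h => hza (hinv.injective h)
  have hout : ¬ CBetween a z (m a) := (cbetween_swap_iff hz.left_ne_right.symm hza hzma).mp hz
  have hout' : ¬ CBetween a (m z) (m a) := fun h => hnc z (Or.inr ⟨h, hout⟩)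
  exact (cbetween_swap_iff hz.left_ne_right.symm hmza hmzma).mpr hout'

lemma mapsTo_bperm_arcIoc (hinv : Function.Involutive m) {a : Fin N} (ha : m a ≠ a)
    (hnc : ∀ b, ¬ Crosses m a b) : MapsTo (bperm m) (arcIoc (m a) a) (arcIoc (m a) a) := by
  intro z hz
  rcases eq_or_cbetween_of_mem_arcIoc hz with rfl | hz
  · exact cnext_mem_arcIoc ha
  · exact (hz.partner_of_forall_not_crosses hinv hnc).cnext_mem_arcIoc

lemma iterate_bperm_ne_of_forall_not_crosses (hinv : Function.Involutive m) {a : Fin N}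
    (ha : m a ≠ a) (hnc : ∀ b, ¬ Crosses m a b) (k : ℕ) : (bperm m)^[k] a ≠ m a := by
  intro hk
  have hmem := (mapsTo_bperm_arcIoc hinv ha hnc).iterate k (right_mem_arcIoc ha)
  rw [hk] at hmem
  exact left_notMem_arcIoc _ _ hmem

end ChordDiagram

/-- "Distinct cycles" is read as: `m a` is not in the orbit of `a` under `bperm m`; "exactly one
cycle" as: `bperm m` is transitive. The 1-chord diagram has two cycles, so transitivity
already excludes it. -/
theorem noncrossing_chord_separates_cycles {n : ℕ}
    (m : Fin (2 * n + 2) → Fin (2 * n + 2))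
    (hinv : Function.Involutive m) (hfix : ∀ i, m i ≠ i) :
    (∀ a : Fin (2 * n + 2), (∀ b, ¬ Crosses m a b) →
      ¬ ∃ k : ℕ, (bperm m)^[k] a = m a) ∧
    ((∀ i j : Fin (2 * n + 2), ∃ k : ℕ, (bperm m)^[k] i = j) →
      ∀ a : Fin (2 * n + 2), ∃ b, Crosses m a b) := by
  have separates : ∀ a, (∀ b, ¬ Crosses m a b) → ¬ ∃ k, (bperm m)^[k] a = m a :=
    fun a hnc ⟨k, hk⟩ => iterate_bperm_ne_of_forall_not_crosses hinv (hfix a) hnc k hk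
  refine ⟨separates, fun htrans a => ?_⟩
  by_contra! hnc
  exact separates a hnc (htrans a (m a))
end

section
/- For the group SL(2,ℤ) acting on the free module ℤ[SL(2,ℤ)] generated by a single element f₀, the quotient by the left ideal generated by ([0,-1;1,1] - [1,-1;0,1] + 1)·f₀ and (1 + [0,1;-1,0])·f₀ is a nonzero cyclic SL(2,ℤ)-module. -/
/-!
STATEMENT 13: For the group SL(2,ℤ) acting on the free module ℤ[SL(2,ℤ)]
generated by a single element f₀, the quotient by the left ideal generated by
([0,-1;1,1] - [1,-1;0,1] + 1)·f₀ and (1 + [0,1;-1,0])·f₀ is a nonzero cyclic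
SL(2,ℤ)-module.

Formalization: ℤ[SL(2,ℤ)] = MonoidAlgebra ℤ SL(2,ℤ) as a module over itself
(free of rank 1 on f₀ = 1); the quotient by the left ideal (submodule) spanned
by the two relation elements is nontrivial and generated by the class of f₀.
-/

abbrev SL2Z := Matrix.SpecialLinearGroup (Fin 2) ℤ

def slA : SL2Z := ⟨!![0, -1; 1, 1], by simp [Matrix.det_fin_two_of]⟩
def slB : SL2Z := ⟨!![1, -1; 0, 1], by simp [Matrix.det_fin_two_of]⟩
def slC : SL2Z := ⟨!![0, 1; -1, 0], by simp [Matrix.det_fin_two_of]⟩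

/-- The left ideal of relations of the genus-1 Steinberg module. -/
noncomputable def steinbergRelations :
    Submodule (MonoidAlgebra ℤ SL2Z) (MonoidAlgebra ℤ SL2Z) :=
  Submodule.span (MonoidAlgebra ℤ SL2Z)
    {MonoidAlgebra.of ℤ SL2Z slA - MonoidAlgebra.of ℤ SL2Z slB + 1,
     1 + MonoidAlgebra.of ℤ SL2Z slC}

/-!
Reducing mod 2 makes `SL(2,ℤ)` act on `(ℤ/2)²`, hence `ℤ[SL(2,ℤ)]` too. Both relations kill
`v = (1,1)`: mod 2 one has `slA v = (1,0)`, `slB v = (0,1)` and `slC v = v`. So `f₀ ↦ v` induces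
a module map out of the quotient sending the class of `f₀` to `v ≠ 0`.
-/

open scoped Matrix

theorem Submodule.one_notMem_span_of_forall_apply_eq_zero {R S V : Type*} [Ring R] [Semiring S]
    [AddCommMonoid V] [Module S V] (φ : R →+* Module.End S V) {v : V} (hv : v ≠ 0) {s : Set R}
    (hs : ∀ r ∈ s, φ r v = 0) : (1 : R) ∉ Submodule.span R s := by
  let _ := Module.compHom V φ
  intro h
  have hker : Submodule.span R s ≤ LinearMap.ker (LinearMap.toSpanSingleton R V v) :=
    Submodule.span_le.mpr hs
  exact hv (by simpa using hker h)

theorem Submodule.Quotient.span_mk_one_eq_top {R : Type*} [Ring R] (I : Submodule R R) :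
    Submodule.span R {(Submodule.Quotient.mk 1 : R ⧸ I)} = ⊤ := by
  refine (Submodule.span_singleton_eq_top_iff R _).mpr fun x => ?_
  obtain ⟨r, rfl⟩ := Submodule.Quotient.mk_surjective I x
  exact ⟨r, by rw [← Submodule.Quotient.mk_smul, smul_eq_mul, mul_one]⟩

noncomputable def modTwoAction : MonoidAlgebra ℤ SL2Z →ₐ[ℤ] Module.End (ZMod 2) (Fin 2 → ZMod 2) :=
  MonoidAlgebra.lift ℤ _ SL2Z <| Matrix.toLinAlgEquiv'.toMonoidHom.comp <|
    Matrix.SpecialLinearGroup.coeMonoidHom.comp <|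
      Matrix.SpecialLinearGroup.map (Int.castRingHom (ZMod 2))

theorem modTwoAction_of_apply (g : SL2Z) (v : Fin 2 → ZMod 2) :
    modTwoAction (MonoidAlgebra.of ℤ SL2Z g) v =
      (g.map (Int.castRingHom (ZMod 2)) : Matrix (Fin 2) (Fin 2) (ZMod 2)) *ᵥ v := by
  rw [modTwoAction, MonoidAlgebra.lift_of]; rfl

theorem modTwoAction_steinbergRelations_apply :
    ∀ r ∈ ({MonoidAlgebra.of ℤ SL2Z slA - MonoidAlgebra.of ℤ SL2Z slB + 1,
      1 + MonoidAlgebra.of ℤ SL2Z slC} : Set (MonoidAlgebra ℤ SL2Z)),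
      modTwoAction r ![1, 1] = 0 := by
  simp only [Set.mem_insert_iff, Set.mem_singleton_iff, forall_eq_or_imp, forall_eq, map_add,
    map_sub, map_one, LinearMap.add_apply, LinearMap.sub_apply, Module.End.one_apply,
    modTwoAction_of_apply]
  constructor <;> decide

theorem genus_one_steinberg_nonzero_cyclic :
    Nontrivial (MonoidAlgebra ℤ SL2Z ⧸ steinbergRelations) ∧
    Submodule.span (MonoidAlgebra ℤ SL2Z)
      {(Submodule.Quotient.mk (1 : MonoidAlgebra ℤ SL2Z) :
        MonoidAlgebra ℤ SL2Z ⧸ steinbergRelations)} = ⊤ := by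
  refine ⟨Submodule.Quotient.nontrivial_iff.mpr ?_, Submodule.Quotient.span_mk_one_eq_top _⟩
  rw [Ne, Ideal.eq_top_iff_one]
  exact Submodule.one_notMem_span_of_forall_apply_eq_zero modTwoAction.toRingHom
    (by decide) modTwoAction_steinbergRelations_apply
end

section
/- There are exactly 4 unlabelled chord diagrams with 4 chords, one cycle, and no parallel chords (up to rotation). Consequently the mapping class group Mod(S₂¹) has exactly 4 orbits of 0-filling systems on the genus-2 surface with one marked point. -/
/-- Rotation equivalence of chord diagrams: `m'` is obtained from `m` by
rotating the `N` points by `r` steps. -/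
def RotEquiv {N : ℕ} (m m' : Fin N → Fin N) : Prop :=
  ∃ r : ℕ, ∀ i, m' (cnext^[r] i) = cnext^[r] (m i)

/-- The diagram has a pair of parallel chords: two chords which together with
two outer edges bound a rectangular cycle. -/
def HasParallel {N : ℕ} (m : Fin N → Fin N) : Prop :=
  ∃ a, cnext (m a) ≠ a ∧ cnext (m a) ≠ m a ∧ cnext (m (cnext (m a))) = a

/-- An (unlabelled) chord diagram corresponding to a 0-filling system of the
genus-2 surface with one marked point: 4 chords (a fixed-point-free involution
of the 8 points), one cycle, and no parallel chords. -/
def IsGenusTwoZeroFilling (m : Fin 8 → Fin 8) : Prop :=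
  Function.Involutive m ∧ (∀ i, m i ≠ i) ∧ numCycles m = 1 ∧ ¬ HasParallel m


instance (m : Fin 8 → Fin 8) : Decidable (Function.Involutive m) :=
  inferInstanceAs (Decidable (∀ x, m (m x) = x))

instance {N : ℕ} (x z y : Fin N) : Decidable (CBetween x z y) :=
  inferInstanceAs (Decidable (_ ∧ _))

instance {N : ℕ} (m : Fin N → Fin N) : Decidable (HasParallel m) :=
  inferInstanceAs (Decidable (∃ a, _ ∧ _ ∧ _))

instance (m : Fin 8 → Fin 8) : Decidable (IsGenusTwoZeroFilling m) :=
  inferInstanceAs (Decidable (_ ∧ _ ∧ _ ∧ _))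

def Ls : Fin 4 → Fin 8 → Fin 8 :=
  ![![(2:Fin 8),(3:Fin 8),(0:Fin 8),(1:Fin 8),(6:Fin 8),(7:Fin 8),(4:Fin 8),(5:Fin 8)], ![(2:Fin 8),(4:Fin 8),(0:Fin 8),(6:Fin 8),(1:Fin 8),(7:Fin 8),(3:Fin 8),(5:Fin 8)], ![(2:Fin 8),(5:Fin 8),(0:Fin 8),(6:Fin 8),(7:Fin 8),(1:Fin 8),(3:Fin 8),(4:Fin 8)], ![(4:Fin 8),(5:Fin 8),(6:Fin 8),(7:Fin 8),(0:Fin 8),(1:Fin 8),(2:Fin 8),(3:Fin 8)]]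

set_option maxHeartbeats 4000000 in
set_option synthInstance.maxHeartbeats 2000000 in
set_option synthInstance.maxSize 2000 in
theorem key_enum :
    ∀ a0 : Fin 8, a0 ≠ 0 →
    ∀ a1 : Fin 8, (a1 ≠ 1 ∧ (a0 = 1 ↔ a1 = 0)) →
    ∀ a2 : Fin 8, (a2 ≠ 2 ∧ (a0 = 2 ↔ a2 = 0) ∧ (a1 = 2 ↔ a2 = 1)) →
    ∀ a3 : Fin 8, (a3 ≠ 3 ∧ (a0 = 3 ↔ a3 = 0) ∧ (a1 = 3 ↔ a3 = 1) ∧ (a2 = 3 ↔ a3 = 2)) →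
    ∀ a4 : Fin 8, (a4 ≠ 4 ∧ (a0 = 4 ↔ a4 = 0) ∧ (a1 = 4 ↔ a4 = 1) ∧ (a2 = 4 ↔ a4 = 2) ∧ (a3 = 4 ↔ a4 = 3)) →
    ∀ a5 : Fin 8, (a5 ≠ 5 ∧ (a0 = 5 ↔ a5 = 0) ∧ (a1 = 5 ↔ a5 = 1) ∧ (a2 = 5 ↔ a5 = 2) ∧ (a3 = 5 ↔ a5 = 3) ∧ (a4 = 5 ↔ a5 = 4)) →
    ∀ a6 : Fin 8, (a6 ≠ 6 ∧ (a0 = 6 ↔ a6 = 0) ∧ (a1 = 6 ↔ a6 = 1) ∧ (a2 = 6 ↔ a6 = 2) ∧ (a3 = 6 ↔ a6 = 3) ∧ (a4 = 6 ↔ a6 = 4) ∧ (a5 = 6 ↔ a6 = 5)) →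
    ∀ a7 : Fin 8, (a7 ≠ 7 ∧ (a0 = 7 ↔ a7 = 0) ∧ (a1 = 7 ↔ a7 = 1) ∧ (a2 = 7 ↔ a7 = 2) ∧ (a3 = 7 ↔ a7 = 3) ∧ (a4 = 7 ↔ a7 = 4) ∧ (a5 = 7 ↔ a7 = 5) ∧ (a6 = 7 ↔ a7 = 6)) →
    IsGenusTwoZeroFilling ![a0,a1,a2,a3,a4,a5,a6,a7] →
    ∃ i : Fin 4, ∃ r : Fin 8, ∀ x, (![a0,a1,a2,a3,a4,a5,a6,a7] : Fin 8 → Fin 8) (cnext^[r.val] x) = cnext^[r.val] (Ls i x) := by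
  decide

lemma cnext8 : ∀ i : Fin 8, cnext^[8] i = i := by decide

lemma cnext_mod (r : ℕ) (i : Fin 8) : cnext^[r] i = cnext^[r % 8] i := by
  conv_lhs => rw [← Nat.div_add_mod r 8]
  rw [Function.iterate_add_apply]
  generalize cnext^[r % 8] i = x
  have h8 : (cnext : Fin 8 → Fin 8)^[8] = id := funext cnext8
  rw [Function.iterate_mul, h8, Function.iterate_id, id]

lemma Ls_good : ∀ i : Fin 4, IsGenusTwoZeroFilling (Ls i) := by decide

lemma Ls_distinct : ∀ i j : Fin 4, i ≠ j → ∀ r : ℕ, r < 8 →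
    ¬ ∀ x, Ls j (cnext^[r] x) = cnext^[r] (Ls i x) := by decide

/-!
STATEMENT 17: There are exactly 4 unlabelled chord diagrams with 4 chords, one
cycle, and no parallel chords (up to rotation).  Consequently (since orbits of
0-filling systems correspond bijectively to such unlabelled diagrams) the
mapping class group Mod(S₂¹) has exactly 4 orbits of 0-filling systems on the
genus-2 surface with one marked point.
-/

theorem four_genus_two_zero_filling_diagrams :
    ∃ L : Fin 4 → (Fin 8 → Fin 8),
      (∀ i, IsGenusTwoZeroFilling (L i)) ∧
      (∀ i j, i ≠ j → ¬ RotEquiv (L i) (L j)) ∧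
      (∀ m, IsGenusTwoZeroFilling m → ∃ i, RotEquiv (L i) m) := by
  refine ⟨Ls, Ls_good, ?_, ?_⟩
  · rintro i j hij ⟨r, h⟩
    refine Ls_distinct i j hij (r % 8) (Nat.mod_lt _ (by norm_num)) (fun x => ?_)
    rw [← cnext_mod, ← cnext_mod]
    exact h x
  · intro m hm
    have hv : m = ![m 0, m 1, m 2, m 3, m 4, m 5, m 6, m 7] := by
      funext x; fin_cases x <;> rfl
    have hfp := hm.2.1
    have iv : ∀ j k : Fin 8, (m j = k ↔ m k = j) := fun j k =>
      ⟨fun h => by rw [← h, hm.1], fun h => by rw [← h, hm.1]⟩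
    have hm' : IsGenusTwoZeroFilling ![m 0, m 1, m 2, m 3, m 4, m 5, m 6, m 7] := by
      rw [← hv]; exact hm
    obtain ⟨i, r, h⟩ := key_enum (m 0) (hfp 0)
      (m 1) ⟨hfp 1, iv 0 1⟩
      (m 2) ⟨hfp 2, iv 0 2, iv 1 2⟩
      (m 3) ⟨hfp 3, iv 0 3, iv 1 3, iv 2 3⟩
      (m 4) ⟨hfp 4, iv 0 4, iv 1 4, iv 2 4, iv 3 4⟩
      (m 5) ⟨hfp 5, iv 0 5, iv 1 5, iv 2 5, iv 3 5, iv 4 5⟩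
      (m 6) ⟨hfp 6, iv 0 6, iv 1 6, iv 2 6, iv 3 6, iv 4 6, iv 5 6⟩
      (m 7) ⟨hfp 7, iv 0 7, iv 1 7, iv 2 7, iv 3 7, iv 4 7, iv 5 7, iv 6 7⟩
      hm'
    exact ⟨i, r.val, fun x => by rw [hv]; exact h x⟩
end
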